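/- arXiv:1305.4990 — 3 statements merged into one kernel-verified Lean document; each statement's English description precedes it below -/
import Mathlib

section
/- Let A1, A2, A3 ∈ 𝔹 be pairwise distinct and not collinear in ℝⁿ. Define m1 = (γ12 + γ13 − γ23 − 1)(γ23 − 1), m2 = (γ12 − γ13 + γ23 − 1)(γ13 − 1), m3 = (−γ12 + γ13 + γ23 − 1)(γ12 − 1), assume D := m1·γ_{A1} + m2·γ_{A2} + m3·γ_{A3} ≠ 0, and assume that the point O = (m1·γ_{A1}·A1 + m2·γ_{A2}·A2 + m3·γ_{A3}·A3)/D lies in 𝔹. Then O is equigyrodistant from the three vertices: ‖⊖A1 ⊕ O‖ = ‖⊖A2 ⊕ O‖ = ‖⊖A3 ⊕ O‖; that is, O is a circumgyrocenter of gyrotriangle A1A2A3. -/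
open RealInnerProductSpace

/-- Lorentz gamma factor of a vector `v` in the `s`-ball of `ℝⁿ`. -/
noncomputable def egamma {n : ℕ} (s : ℝ) (v : EuclideanSpace ℝ (Fin n)) : ℝ :=
  1 / Real.sqrt (1 - ‖v‖ ^ 2 / s ^ 2)

/-- Einstein addition on the `s`-ball of `ℝⁿ`. -/
noncomputable def eadd {n : ℕ} (s : ℝ) (u v : EuclideanSpace ℝ (Fin n)) :
    EuclideanSpace ℝ (Fin n) :=
  (1 / (1 + ⟪u, v⟫ / s ^ 2)) •
    (u + (1 / egamma s u) • v + (egamma s u / (s ^ 2 * (1 + egamma s u))) • ⟪u, v⟫ • u)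

/-- Gyroangle at vertex `X` between points `Y` and `Z`. -/
noncomputable def gyroangle {n : ℕ} (s : ℝ) (X Y Z : EuclideanSpace ℝ (Fin n)) : ℝ :=
  Real.arccos ⟪‖eadd s (-X) Y‖⁻¹ • eadd s (-X) Y, ‖eadd s (-X) Z‖⁻¹ • eadd s (-X) Z⟫

/-- Gamma factor of a real gyrodistance `d`. -/
noncomputable def gammaR (s d : ℝ) : ℝ := 1 / Real.sqrt (1 - d ^ 2 / s ^ 2)

/-! The gamma factor of `⊖u ⊕ v` is `γ_u γ_v (1 - ⟪u, v⟫ / s²)`, which is affine in `v` once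
divided by `γ_v`. Hence for the gyrobarycentric combination `O` of points `A_j` with weights
`m_j`, `γ_{⊖X ⊕ O} · ∑ m_j γ_{A_j} = γ_O · ∑ m_j γ_{⊖X ⊕ A_j}` for every `X`. For the weights of
the theorem the sum `∑_j m_j γ_{ij}` (with `γ_{ii} = 1`) does not depend on `i`, so `O` has the
same gamma factor, hence the same gyrodistance, to each vertex. -/

section

variable {n : ℕ} {s : ℝ}

lemma one_sub_norm_sq_div_sq_pos (hs : 0 < s) {v : EuclideanSpace ℝ (Fin n)} (hv : ‖v‖ < s) :
    0 < 1 - ‖v‖ ^ 2 / s ^ 2 := by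
  rw [sub_pos, div_lt_one (by positivity)]
  gcongr

lemma egamma_pos (hs : 0 < s) {v : EuclideanSpace ℝ (Fin n)} (hv : ‖v‖ < s) :
    0 < egamma s v := by
  have := one_sub_norm_sq_div_sq_pos hs hv
  unfold egamma
  positivity

lemma egamma_sq_mul (hs : 0 < s) {v : EuclideanSpace ℝ (Fin n)} (hv : ‖v‖ < s) :
    egamma s v ^ 2 * (1 - ‖v‖ ^ 2 / s ^ 2) = 1 := by
  have := one_sub_norm_sq_div_sq_pos hs hv
  rw [egamma, div_pow, one_pow, Real.sq_sqrt this.le, one_div_mul_cancel this.ne']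

lemma egamma_neg (v : EuclideanSpace ℝ (Fin n)) : egamma s (-v) = egamma s v := by
  rw [egamma, egamma, norm_neg]

lemma one_add_inner_div_sq_pos (hs : 0 < s) {u v : EuclideanSpace ℝ (Fin n)}
    (hu : ‖u‖ < s) (hv : ‖v‖ < s) : 0 < 1 + ⟪u, v⟫ / s ^ 2 := by
  have huv : |⟪u, v⟫| < s ^ 2 := by
    calc |⟪u, v⟫| ≤ ‖u‖ * ‖v‖ := abs_real_inner_le_norm u v
      _ < s ^ 2 := by rw [sq]; exact mul_lt_mul'' hu hv (norm_nonneg u) (norm_nonneg v)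
  have : -1 < ⟪u, v⟫ / s ^ 2 := by
    rw [lt_div_iff₀ (by positivity)]
    linarith [neg_abs_le ⟪u, v⟫]
  linarith

lemma one_sub_norm_sq_eadd (hs : 0 < s) {u v : EuclideanSpace ℝ (Fin n)} (hu : ‖u‖ < s)
    (hv : ‖v‖ < s) :
    (1 + ⟪u, v⟫ / s ^ 2) ^ 2 * (1 - ‖eadd s u v‖ ^ 2 / s ^ 2)
      = (1 - ‖u‖ ^ 2 / s ^ 2) * (1 - ‖v‖ ^ 2 / s ^ 2) := by
  set g := egamma s u
  have hg : g ^ 2 * (1 - ‖u‖ ^ 2 / s ^ 2) = 1 := egamma_sq_mul hs hu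
  have hg0 : 0 < g := egamma_pos hs hu
  have hp := (one_add_inner_div_sq_pos hs hu hv).ne'
  have hnorm : (1 + ⟪u, v⟫ / s ^ 2) ^ 2 * ‖eadd s u v‖ ^ 2 =
      (1 + g * ⟪u, v⟫ / (s ^ 2 * (1 + g))) ^ 2 * ‖u‖ ^ 2
        + 2 * (1 + g * ⟪u, v⟫ / (s ^ 2 * (1 + g))) * (1 / g) * ⟪u, v⟫
        + (1 / g) ^ 2 * ‖v‖ ^ 2 := by
    rw [eadd, norm_smul, mul_pow, Real.norm_eq_abs, sq_abs, ← mul_assoc, ← mul_pow,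
      mul_one_div_cancel hp, one_pow, one_mul, ← real_inner_self_eq_norm_sq,
      ← real_inner_self_eq_norm_sq u, ← real_inner_self_eq_norm_sq v]
    simp only [inner_add_left, inner_add_right, real_inner_smul_left, real_inner_smul_right,
      real_inner_comm v u]
    ring
  have hU : ‖u‖ ^ 2 = s ^ 2 - s ^ 2 / g ^ 2 := by
    field_simp at hg ⊢; linarith
  rw [mul_one_sub, mul_div_assoc', hnorm, hU]
  field_simp
  ring

lemma egamma_eadd (hs : 0 < s) {u v : EuclideanSpace ℝ (Fin n)} (hu : ‖u‖ < s) (hv : ‖v‖ < s) :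
    egamma s (eadd s u v) = egamma s u * egamma s v * (1 + ⟪u, v⟫ / s ^ 2) := by
  have hp := one_add_inner_div_sq_pos hs hu hv
  have hbu := one_sub_norm_sq_div_sq_pos hs hu
  have hbv := one_sub_norm_sq_div_sq_pos hs hv
  have h : 1 - ‖eadd s u v‖ ^ 2 / s ^ 2
      = (1 - ‖u‖ ^ 2 / s ^ 2) * (1 - ‖v‖ ^ 2 / s ^ 2) / (1 + ⟪u, v⟫ / s ^ 2) ^ 2 := by
    rw [← one_sub_norm_sq_eadd hs hu hv, mul_div_cancel_left₀ _ (by positivity)]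
  rw [egamma, egamma, egamma, h, Real.sqrt_div' _ (by positivity), Real.sqrt_mul hbu.le,
    Real.sqrt_sq hp.le]
  field_simp

lemma norm_eadd_lt (hs : 0 < s) {u v : EuclideanSpace ℝ (Fin n)} (hu : ‖u‖ < s) (hv : ‖v‖ < s) :
    ‖eadd s u v‖ < s := by
  have h := one_sub_norm_sq_eadd hs hu hv
  have hpos : 0 < (1 - ‖u‖ ^ 2 / s ^ 2) * (1 - ‖v‖ ^ 2 / s ^ 2) :=
    mul_pos (one_sub_norm_sq_div_sq_pos hs hu) (one_sub_norm_sq_div_sq_pos hs hv)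
  rw [← h] at hpos
  have : ‖eadd s u v‖ ^ 2 < s ^ 2 := by
    have := (pos_of_mul_pos_right hpos (sq_nonneg _))
    rwa [sub_pos, div_lt_one (by positivity)] at this
  exact lt_of_pow_lt_pow_left₀ 2 hs.le this

lemma egamma_neg_eadd (hs : 0 < s) {u v : EuclideanSpace ℝ (Fin n)} (hu : ‖u‖ < s)
    (hv : ‖v‖ < s) :
    egamma s (eadd s (-u) v) = egamma s u * egamma s v * (1 - ⟪u, v⟫ / s ^ 2) := by
  rw [egamma_eadd hs (by rwa [norm_neg]) hv, egamma_neg, inner_neg_left, neg_div, sub_eq_add_neg]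

lemma egamma_neg_eadd_comm (hs : 0 < s) {u v : EuclideanSpace ℝ (Fin n)} (hu : ‖u‖ < s)
    (hv : ‖v‖ < s) : egamma s (eadd s (-u) v) = egamma s (eadd s (-v) u) := by
  rw [egamma_neg_eadd hs hu hv, egamma_neg_eadd hs hv hu, real_inner_comm, mul_comm (egamma s u)]

lemma egamma_neg_eadd_self (hs : 0 < s) {u : EuclideanSpace ℝ (Fin n)} (hu : ‖u‖ < s) :
    egamma s (eadd s (-u) u) = 1 := by
  rw [egamma_neg_eadd hs hu hu, real_inner_self_eq_norm_sq, ← sq, egamma_sq_mul hs hu]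

lemma norm_eq_of_egamma_eq (hs : 0 < s) {u v : EuclideanSpace ℝ (Fin n)} (hu : ‖u‖ < s)
    (hv : ‖v‖ < s) (h : egamma s u = egamma s v) : ‖u‖ = ‖v‖ := by
  have hu' := egamma_sq_mul hs hu
  have hv' := egamma_sq_mul hs hv
  rw [h] at hu'
  have : 1 - ‖u‖ ^ 2 / s ^ 2 = 1 - ‖v‖ ^ 2 / s ^ 2 :=
    mul_left_cancel₀ (pow_ne_zero 2 (egamma_pos hs hv).ne') (hu'.trans hv'.symm)
  rw [sub_right_inj, div_left_inj' (by positivity)] at this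
  exact (sq_eq_sq₀ (norm_nonneg u) (norm_nonneg v)).1 this

noncomputable def gyroBarycenter {ι : Type*} (s : ℝ) (t : Finset ι) (m : ι → ℝ)
    (A : ι → EuclideanSpace ℝ (Fin n)) : EuclideanSpace ℝ (Fin n) :=
  (∑ i ∈ t, m i * egamma s (A i))⁻¹ • ∑ i ∈ t, (m i * egamma s (A i)) • A i

lemma egamma_neg_eadd_gyroBarycenter {ι : Type*} (hs : 0 < s) {t : Finset ι} {m : ι → ℝ}
    {A : ι → EuclideanSpace ℝ (Fin n)} {X : EuclideanSpace ℝ (Fin n)} (hX : ‖X‖ < s)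
    (hA : ∀ i ∈ t, ‖A i‖ < s) (hP : ‖gyroBarycenter s t m A‖ < s)
    (hD : ∑ i ∈ t, m i * egamma s (A i) ≠ 0) :
    egamma s (eadd s (-X) (gyroBarycenter s t m A)) * ∑ i ∈ t, m i * egamma s (A i)
      = egamma s (gyroBarycenter s t m A) * ∑ i ∈ t, m i * egamma s (eadd s (-X) (A i)) := by
  set D := ∑ i ∈ t, m i * egamma s (A i)
  have hinner : ⟪X, gyroBarycenter s t m A⟫
      = D⁻¹ * ∑ i ∈ t, m i * egamma s (A i) * ⟪X, A i⟫ := by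
    simp only [gyroBarycenter, real_inner_smul_right, inner_sum, D]
  have hsum : ∑ i ∈ t, m i * egamma s (eadd s (-X) (A i))
      = egamma s X * (D - (∑ i ∈ t, m i * egamma s (A i) * ⟪X, A i⟫) / s ^ 2) := by
    rw [Finset.sum_div, ← Finset.sum_sub_distrib, Finset.mul_sum]
    refine Finset.sum_congr rfl fun i hi => ?_
    rw [egamma_neg_eadd hs hX (hA i hi)]
    ring
  rw [egamma_neg_eadd hs hX hP, hsum, hinner]
  field_simp

lemma norm_neg_eadd_gyroBarycenter_eq {ι : Type*} (hs : 0 < s) {t : Finset ι} {m : ι → ℝ}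
    {A : ι → EuclideanSpace ℝ (Fin n)} {X Y : EuclideanSpace ℝ (Fin n)} (hX : ‖X‖ < s)
    (hY : ‖Y‖ < s) (hA : ∀ i ∈ t, ‖A i‖ < s) (hP : ‖gyroBarycenter s t m A‖ < s)
    (hD : ∑ i ∈ t, m i * egamma s (A i) ≠ 0)
    (h : ∑ i ∈ t, m i * egamma s (eadd s (-X) (A i))
      = ∑ i ∈ t, m i * egamma s (eadd s (-Y) (A i))) :
    ‖eadd s (-X) (gyroBarycenter s t m A)‖ = ‖eadd s (-Y) (gyroBarycenter s t m A)‖ := by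
  refine norm_eq_of_egamma_eq hs (norm_eadd_lt hs (by rwa [norm_neg]) hP)
    (norm_eadd_lt hs (by rwa [norm_neg]) hP) (mul_right_cancel₀ hD ?_)
  rw [egamma_neg_eadd_gyroBarycenter hs hX hA hP hD,
    egamma_neg_eadd_gyroBarycenter hs hY hA hP hD, h]

end

theorem circumgyrocenter_equigyrodistant_general {n : ℕ} (s : ℝ) (hs : 0 < s)
    (A1 A2 A3 O : EuclideanSpace ℝ (Fin n))
    (hA1 : ‖A1‖ < s) (hA2 : ‖A2‖ < s) (hA3 : ‖A3‖ < s)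
    (γ12 γ13 γ23 m1 m2 m3 D : ℝ)
    (hγ12 : γ12 = egamma s (eadd s (-A1) A2))
    (hγ13 : γ13 = egamma s (eadd s (-A1) A3))
    (hγ23 : γ23 = egamma s (eadd s (-A2) A3))
    (hm1 : m1 = (γ12 + γ13 - γ23 - 1) * (γ23 - 1))
    (hm2 : m2 = (γ12 - γ13 + γ23 - 1) * (γ13 - 1))
    (hm3 : m3 = (-γ12 + γ13 + γ23 - 1) * (γ12 - 1))
    (hD : D = m1 * egamma s A1 + m2 * egamma s A2 + m3 * egamma s A3)
    (hDne : D ≠ 0)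
    (hO : O = D⁻¹ • ((m1 * egamma s A1) • A1 + (m2 * egamma s A2) • A2 +
      (m3 * egamma s A3) • A3))
    (hOball : ‖O‖ < s) :
    ‖eadd s (-A1) O‖ = ‖eadd s (-A2) O‖ ∧ ‖eadd s (-A2) O‖ = ‖eadd s (-A3) O‖ := by
  have hOeq : O = gyroBarycenter s Finset.univ ![m1, m2, m3] ![A1, A2, A3] := by
    simp [gyroBarycenter, Fin.sum_univ_three, hO, hD, add_assoc]
  have hA : ∀ i ∈ Finset.univ, ‖![A1, A2, A3] i‖ < s := by
    simp [Fin.forall_fin_succ, hA1, hA2, hA3]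
  have hDsum : ∑ i, ![m1, m2, m3] i * egamma s (![A1, A2, A3] i) ≠ 0 := by
    simpa [Fin.sum_univ_three, hD, add_assoc] using hDne
  have h21 : egamma s (eadd s (-A2) A1) = γ12 := by rw [hγ12, egamma_neg_eadd_comm hs hA2 hA1]
  have h31 : egamma s (eadd s (-A3) A1) = γ13 := by rw [hγ13, egamma_neg_eadd_comm hs hA3 hA1]
  have h32 : egamma s (eadd s (-A3) A2) = γ23 := by rw [hγ23, egamma_neg_eadd_comm hs hA3 hA2]
  subst hOeq
  refine ⟨norm_neg_eadd_gyroBarycenter_eq hs hA1 hA2 hA hOball hDsum ?_,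
    norm_neg_eadd_gyroBarycenter_eq hs hA2 hA3 hA hOball hDsum ?_⟩ <;>
  · simp only [Fin.sum_univ_three, Matrix.cons_val_zero, Matrix.cons_val_one, Matrix.cons_val_two,
      Matrix.tail_cons, Matrix.head_cons, egamma_neg_eadd_self hs hA1, egamma_neg_eadd_self hs hA2,
      egamma_neg_eadd_self hs hA3, ← hγ12, ← hγ13, ← hγ23, h21, h31, h32, hm1, hm2, hm3]
    ring

/-- **Circumgyrocenter is equigyrodistant from the vertices.** -/
theorem circumgyrocenter_equigyrodistant {n : ℕ} (hn : 2 ≤ n) (s : ℝ) (hs : 0 < s)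
    (A1 A2 A3 O : EuclideanSpace ℝ (Fin n))
    (hA1 : ‖A1‖ < s) (hA2 : ‖A2‖ < s) (hA3 : ‖A3‖ < s)
    (h12 : A1 ≠ A2) (h13 : A1 ≠ A3) (h23 : A2 ≠ A3)
    (hncol : ¬ Collinear ℝ ({A1, A2, A3} : Set (EuclideanSpace ℝ (Fin n))))
    (γ12 γ13 γ23 m1 m2 m3 D : ℝ)
    (hγ12 : γ12 = egamma s (eadd s (-A1) A2))
    (hγ13 : γ13 = egamma s (eadd s (-A1) A3))
    (hγ23 : γ23 = egamma s (eadd s (-A2) A3))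
    (hm1 : m1 = (γ12 + γ13 - γ23 - 1) * (γ23 - 1))
    (hm2 : m2 = (γ12 - γ13 + γ23 - 1) * (γ13 - 1))
    (hm3 : m3 = (-γ12 + γ13 + γ23 - 1) * (γ12 - 1))
    (hD : D = m1 * egamma s A1 + m2 * egamma s A2 + m3 * egamma s A3)
    (hDne : D ≠ 0)
    (hO : O = D⁻¹ • ((m1 * egamma s A1) • A1 + (m2 * egamma s A2) • A2 +
      (m3 * egamma s A3) • A3))
    (hOball : ‖O‖ < s) :
    ‖eadd s (-A1) O‖ = ‖eadd s (-A2) O‖ ∧ ‖eadd s (-A2) O‖ = ‖eadd s (-A3) O‖ :=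
  circumgyrocenter_equigyrodistant_general s hs A1 A2 A3 O hA1 hA2 hA3 γ12 γ13 γ23 m1 m2 m3 D hγ12
    hγ13 hγ23 hm1 hm2 hm3 hD hDne hO hOball
end

section
/- Fix two distinct points A, C ∈ ℝⁿ (n ≥ 2). For each real s > max(‖A‖, ‖C‖), let ⊕_s denote Einstein addition with parameter s and let γ(s) denote the gamma factor with parameter s of (−A) ⊕_s C. Then, as s → ∞, s²(γ(s) − 1) → (1/2)‖C − A‖² and s²(γ(s)² − 1) → ‖C − A‖². -/
open RealInnerProductSpace

open Filter Topology

/-!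
The gamma factor satisfies the exact identity `s²(γ² − 1) = ‖w‖² γ²`, and
`γ − 1 = (γ² − 1)/(γ + 1)`. As `s → ∞`, Einstein addition `(−A) ⊕_s C` tends to the vector sum
`C − A`, and the gamma factor of any convergent family tends to `1`.
-/

section Limits

variable {n : ℕ}

theorem sq_mul_egamma_sq_sub_one {s : ℝ} {w : EuclideanSpace ℝ (Fin n)} (hw : ‖w‖ ^ 2 < s ^ 2) :
    s ^ 2 * (egamma s w ^ 2 - 1) = ‖w‖ ^ 2 * egamma s w ^ 2 := by
  have hs : s ≠ 0 := by rintro rfl; exact (sq_nonneg ‖w‖).not_gt (by simpa using hw)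
  have hd : 0 < s ^ 2 - ‖w‖ ^ 2 := sub_pos.2 hw
  have hpos : 0 < 1 - ‖w‖ ^ 2 / s ^ 2 := by
    rw [one_sub_div (pow_ne_zero 2 hs)]
    positivity
  rw [egamma, div_pow, one_pow, Real.sq_sqrt hpos.le]
  field_simp
  ring

theorem eventually_norm_sq_lt_sq_atTop {w : ℝ → EuclideanSpace ℝ (Fin n)}
    {w₀ : EuclideanSpace ℝ (Fin n)} (hw : Tendsto w atTop (𝓝 w₀)) :
    ∀ᶠ s in atTop, ‖w s‖ ^ 2 < s ^ 2 := by
  filter_upwards [hw.norm.eventually (eventually_lt_nhds (lt_add_one ‖w₀‖)),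
    eventually_gt_atTop (‖w₀‖ + 1)] with s hws hs
  exact pow_lt_pow_left₀ (hws.trans hs) (norm_nonneg _) two_ne_zero

theorem tendsto_egamma_atTop {w : ℝ → EuclideanSpace ℝ (Fin n)}
    {w₀ : EuclideanSpace ℝ (Fin n)} (hw : Tendsto w atTop (𝓝 w₀)) :
    Tendsto (fun s => egamma s (w s)) atTop (𝓝 1) := by
  have hratio : Tendsto (fun s : ℝ => ‖w s‖ ^ 2 / s ^ 2) atTop (𝓝 0) :=
    (hw.norm.pow 2).div_atTop (tendsto_pow_atTop two_ne_zero)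
  simpa [egamma, one_div] using
    ((tendsto_const_nhds (x := (1 : ℝ))).sub hratio).sqrt.inv₀ (by simp)

theorem tendsto_eadd_atTop (u v : EuclideanSpace ℝ (Fin n)) :
    Tendsto (fun s => eadd s u v) atTop (𝓝 (u + v)) := by
  have hγ : Tendsto (fun s : ℝ => egamma s u) atTop (𝓝 1) :=
    tendsto_egamma_atTop tendsto_const_nhds
  have hs2 : Tendsto (fun s : ℝ => s ^ 2) atTop atTop := tendsto_pow_atTop two_ne_zero
  have hscale : Tendsto (fun s : ℝ => 1 / (1 + ⟪u, v⟫ / s ^ 2)) atTop (𝓝 1) := by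
    simpa [one_div] using
      ((tendsto_const_nhds (x := (1 : ℝ))).add (tendsto_const_nhds.div_atTop hs2)).inv₀ (by simp)
  have hv : Tendsto (fun s : ℝ => 1 / egamma s u) atTop (𝓝 1) := by
    simpa [one_div] using hγ.inv₀ one_ne_zero
  have hu : Tendsto (fun s : ℝ => egamma s u / (s ^ 2 * (1 + egamma s u))) atTop (𝓝 0) :=
    hγ.div_atTop (hs2.atTop_mul_pos (by norm_num) ((tendsto_const_nhds (x := (1 : ℝ))).add hγ))
  simpa [eadd] using hscale.smul
    ((tendsto_const_nhds.add (hv.smul_const v)).add (hu.smul_const (⟪u, v⟫ • u)))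

theorem tendsto_sq_mul_egamma_sq_sub_one_atTop {w : ℝ → EuclideanSpace ℝ (Fin n)}
    {w₀ : EuclideanSpace ℝ (Fin n)} (hw : Tendsto w atTop (𝓝 w₀)) :
    Tendsto (fun s => s ^ 2 * (egamma s (w s) ^ 2 - 1)) atTop (𝓝 (‖w₀‖ ^ 2)) := by
  have hlim := (hw.norm.pow 2).mul ((tendsto_egamma_atTop hw).pow 2)
  rw [one_pow, mul_one] at hlim
  refine hlim.congr' ?_
  filter_upwards [eventually_norm_sq_lt_sq_atTop hw] with s hs
  exact (sq_mul_egamma_sq_sub_one hs).symm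

theorem tendsto_sq_mul_egamma_sub_one_atTop {w : ℝ → EuclideanSpace ℝ (Fin n)}
    {w₀ : EuclideanSpace ℝ (Fin n)} (hw : Tendsto w atTop (𝓝 w₀)) :
    Tendsto (fun s => s ^ 2 * (egamma s (w s) - 1)) atTop (𝓝 (‖w₀‖ ^ 2 / 2)) := by
  have hγ := tendsto_egamma_atTop hw
  have hlim := (tendsto_sq_mul_egamma_sq_sub_one_atTop hw).div
    (hγ.add (tendsto_const_nhds (x := (1 : ℝ)))) (by norm_num)
  rw [one_add_one_eq_two] at hlim
  refine hlim.congr' ?_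
  filter_upwards [hγ.eventually (eventually_gt_nhds zero_lt_one)] with s hs
  have hden : egamma s (w s) + 1 ≠ 0 := by linarith
  simp only [Pi.div_apply]
  field_simp
  ring

end Limits

theorem gamma_euclidean_limit_general {n : ℕ}
    (A C : EuclideanSpace ℝ (Fin n)) :
    Tendsto (fun s : ℝ => s ^ 2 * (egamma s (eadd s (-A) C) - 1)) atTop
      (𝓝 (‖C - A‖ ^ 2 / 2)) ∧
    Tendsto (fun s : ℝ => s ^ 2 * ((egamma s (eadd s (-A) C)) ^ 2 - 1)) atTop
      (𝓝 (‖C - A‖ ^ 2)) := by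
  have hsum := tendsto_eadd_atTop (-A) C
  rw [neg_add_eq_sub] at hsum
  exact ⟨tendsto_sq_mul_egamma_sub_one_atTop hsum, tendsto_sq_mul_egamma_sq_sub_one_atTop hsum⟩

/-- **Euclidean limits of gamma factors**: as `s → ∞`,
`s²(γ(s) − 1) → ‖C − A‖²/2` and `s²(γ(s)² − 1) → ‖C − A‖²`. -/
theorem gamma_euclidean_limit {n : ℕ} (hn : 2 ≤ n)
    (A C : EuclideanSpace ℝ (Fin n)) (hAC : A ≠ C) :
    Tendsto (fun s : ℝ => s ^ 2 * (egamma s (eadd s (-A) C) - 1)) atTop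
      (𝓝 (‖C - A‖ ^ 2 / 2)) ∧
    Tendsto (fun s : ℝ => s ^ 2 * ((egamma s (eadd s (-A) C)) ^ 2 - 1)) atTop
      (𝓝 (‖C - A‖ ^ 2)) :=
  gamma_euclidean_limit_general A C
end

section
/- (Gyrotangent–Gyrosecant Theorem.) Let O ∈ 𝔹, 0 < R < s, and let A1, A2, A3 ∈ 𝔹 be pairwise distinct, not collinear in ℝⁿ, with |OA1| = |OA2| = |OA3| = R. Let P ∈ 𝔹, P ∉ {A1, A2, A3}, be a point such that A2 lies strictly between P and A3 on the Euclidean segment from P to A3, and such that ⟨⊖A1 ⊕ P, ⊖A1 ⊕ O⟩ = 0 (the gyroline through P and A1 is gyrotangent to the gyrocircle at A1). Then γ_{|PA1|}²·|PA1|² = (2/(γ_{|A2A3|} + 1)) · γ_{|PA2|}·|PA2| · γ_{|PA3|}·|PA3|. -/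
/-!
Lift each point `v` of the ball to `γ_v (1, v / s)` on the hyperboloid of Minkowski space. The
Minkowski form of two lifts, `lorentzInner s u v = γ_u γ_v (1 - ⟪u, v⟫ / s²)`, is the gamma factor
of `⊖u ⊕ v` and is invariant under left gyrotranslations. Gyrotangency at `A1` therefore becomes
the hyperbolic Pythagorean theorem `γ_{PO} = γ_{A1 P} γ_{A1 O}`, while the Euclidean chord through
`P, A2, A3` becomes a linear relation `X_{A2} = a X_P + b X_{A3}` between lifts. Since
`γ_d d = s √(γ_d² - 1)`, both sides of the identity reduce by elementary algebra to the gyropower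
`s² ((γ_{OP} / γ_R)² - 1)` of `P` with respect to the gyrocircle.
-/

open RealInnerProductSpace

section

variable {n : ℕ} {s : ℝ} {u v w : EuclideanSpace ℝ (Fin n)}

lemma one_sub_sq_div_sq_pos (hu : ‖u‖ < s) : 0 < 1 - ‖u‖ ^ 2 / s ^ 2 := by
  have hs : 0 < s := (norm_nonneg u).trans_lt hu
  rw [sub_pos, div_lt_one (by positivity)]
  exact pow_lt_pow_left₀ hu (norm_nonneg u) two_ne_zero

lemma real_inner_lt_sq (hu : ‖u‖ < s) (hv : ‖v‖ < s) : ⟪u, v⟫ < s ^ 2 :=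
  calc ⟪u, v⟫ ≤ ‖u‖ * ‖v‖ := real_inner_le_norm u v
    _ < s * s := mul_lt_mul'' hu hv (norm_nonneg u) (norm_nonneg v)
    _ = s ^ 2 := (sq s).symm

lemma one_sub_inner_div_sq_pos (hu : ‖u‖ < s) (hv : ‖v‖ < s) : 0 < 1 - ⟪u, v⟫ / s ^ 2 := by
  have hs : 0 < s := (norm_nonneg u).trans_lt hu
  rw [sub_pos, div_lt_one (by positivity)]
  exact real_inner_lt_sq hu hv

lemma one_sub_inner_eadd_neg (hu : ‖u‖ < s) (hv : ‖v‖ < s) (hw : ‖w‖ < s) :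
    (1 - ⟪u, v⟫ / s ^ 2) * (1 - ⟪u, w⟫ / s ^ 2) *
        (1 - ⟪eadd s (-u) v, eadd s (-u) w⟫ / s ^ 2) =
      (1 - ‖u‖ ^ 2 / s ^ 2) * (1 - ⟪v, w⟫ / s ^ 2) := by
  have hs : s ≠ 0 := ((norm_nonneg u).trans_lt hu).ne'
  have hv' := (sub_pos.2 (real_inner_lt_sq hu hv)).ne'
  have hw' := (sub_pos.2 (real_inner_lt_sq hu hw)).ne'
  have hr := one_sub_sq_div_sq_pos hu
  set r := Real.sqrt (1 - ‖u‖ ^ 2 / s ^ 2) with hr_def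
  have hr0 : 0 < r := Real.sqrt_pos.2 hr
  -- `r = 1 / γ_u`; eliminating `‖u‖²` in favour of `r` makes the identity rational in `r`.
  have hu2 : ‖u‖ ^ 2 = s ^ 2 - s ^ 2 * r ^ 2 := by
    rw [hr_def, Real.sq_sqrt hr.le]; field_simp; ring
  have hγ : egamma s (-u) = 1 / r := by simp [egamma, hr_def]
  simp only [eadd, hγ, inner_neg_left, inner_smul_left, inner_smul_right, inner_add_left,
    inner_add_right, inner_neg_right, real_inner_self_eq_norm_sq, real_inner_comm u v,
    RCLike.conj_to_real, neg_div, ← sub_eq_add_neg]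
  rw [hu2]
  field_simp
  ring

lemma egamma_pos_s14 (hu : ‖u‖ < s) : 0 < egamma s u :=
  one_div_pos.2 (Real.sqrt_pos.2 (one_sub_sq_div_sq_pos hu))

lemma egamma_sq_mul_s14 (hu : ‖u‖ < s) : egamma s u ^ 2 * (1 - ‖u‖ ^ 2 / s ^ 2) = 1 := by
  have hr := one_sub_sq_div_sq_pos hu
  rw [egamma, div_pow, Real.sq_sqrt hr.le]
  field_simp

noncomputable def lorentzInner (s : ℝ) (u v : EuclideanSpace ℝ (Fin n)) : ℝ :=
  egamma s u * egamma s v * (1 - ⟪u, v⟫ / s ^ 2)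

lemma lorentzInner_comm (u v : EuclideanSpace ℝ (Fin n)) :
    lorentzInner s u v = lorentzInner s v u := by
  rw [lorentzInner, lorentzInner, real_inner_comm, mul_comm (egamma s u)]

lemma lorentzInner_self (hu : ‖u‖ < s) : lorentzInner s u u = 1 := by
  rw [lorentzInner, real_inner_self_eq_norm_sq, ← sq, egamma_sq_mul_s14 hu]

lemma lorentzInner_pos (hu : ‖u‖ < s) (hv : ‖v‖ < s) : 0 < lorentzInner s u v :=
  mul_pos (mul_pos (egamma_pos_s14 hu) (egamma_pos_s14 hv)) (one_sub_inner_div_sq_pos hu hv)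

lemma lorentzInner_sq_mul_one_sub (hu : ‖u‖ < s) (hv : ‖v‖ < s) :
    lorentzInner s u v ^ 2 * (1 - ‖eadd s (-u) v‖ ^ 2 / s ^ 2) = 1 := by
  have h := one_sub_inner_eadd_neg hu hv hv
  simp only [real_inner_self_eq_norm_sq] at h
  calc lorentzInner s u v ^ 2 * (1 - ‖eadd s (-u) v‖ ^ 2 / s ^ 2)
      = egamma s u ^ 2 * egamma s v ^ 2 *
          ((1 - ⟪u, v⟫ / s ^ 2) * (1 - ⟪u, v⟫ / s ^ 2) * (1 - ‖eadd s (-u) v‖ ^ 2 / s ^ 2)) := by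
        rw [lorentzInner]; ring
    _ = (egamma s u ^ 2 * (1 - ‖u‖ ^ 2 / s ^ 2)) * (egamma s v ^ 2 * (1 - ‖v‖ ^ 2 / s ^ 2)) := by
        rw [h]; ring
    _ = 1 := by rw [egamma_sq_mul_s14 hu, egamma_sq_mul_s14 hv, one_mul]

lemma gammaR_norm_eadd_neg (hu : ‖u‖ < s) (hv : ‖v‖ < s) :
    gammaR s ‖eadd s (-u) v‖ = lorentzInner s u v := by
  have hG := lorentzInner_pos hu hv
  have h : 1 - ‖eadd s (-u) v‖ ^ 2 / s ^ 2 = (1 / lorentzInner s u v) ^ 2 := by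
    rw [one_div_pow]; exact eq_one_div_of_mul_eq_one_right (lorentzInner_sq_mul_one_sub hu hv)
  rw [gammaR, h, Real.sqrt_sq (one_div_pos.2 hG).le, one_div_one_div]

lemma egamma_eadd_neg (hu : ‖u‖ < s) (hv : ‖v‖ < s) :
    egamma s (eadd s (-u) v) = lorentzInner s u v :=
  gammaR_norm_eadd_neg hu hv

lemma sq_gammaR_norm_eadd_neg_mul (hu : ‖u‖ < s) (hv : ‖v‖ < s) :
    (gammaR s ‖eadd s (-u) v‖ * ‖eadd s (-u) v‖) ^ 2 = s ^ 2 * (lorentzInner s u v ^ 2 - 1) := by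
  have hs : s ≠ 0 := ((norm_nonneg u).trans_lt hu).ne'
  have h := lorentzInner_sq_mul_one_sub hu hv
  rw [gammaR_norm_eadd_neg hu hv]
  field_simp at h ⊢
  linear_combination -h

lemma lorentzInner_eadd_neg (hu : ‖u‖ < s) (hv : ‖v‖ < s) (hw : ‖w‖ < s) :
    lorentzInner s (eadd s (-u) v) (eadd s (-u) w) = lorentzInner s v w :=
  calc lorentzInner s (eadd s (-u) v) (eadd s (-u) w)
      = egamma s u ^ 2 * egamma s v * egamma s w * ((1 - ⟪u, v⟫ / s ^ 2) * (1 - ⟪u, w⟫ / s ^ 2) *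
          (1 - ⟪eadd s (-u) v, eadd s (-u) w⟫ / s ^ 2)) := by
        rw [lorentzInner, egamma_eadd_neg hu hv, egamma_eadd_neg hu hw, lorentzInner, lorentzInner]
        ring
    _ = (egamma s u ^ 2 * (1 - ‖u‖ ^ 2 / s ^ 2)) * lorentzInner s v w := by
        rw [one_sub_inner_eadd_neg hu hv hw, lorentzInner]; ring
    _ = lorentzInner s v w := by rw [egamma_sq_mul_s14 hu, one_mul]

lemma lorentzInner_eq_mul_of_inner_eadd_neg_eq_zero (hu : ‖u‖ < s) (hv : ‖v‖ < s)
    (hw : ‖w‖ < s) (h : ⟪eadd s (-u) v, eadd s (-u) w⟫ = 0) :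
    lorentzInner s v w = lorentzInner s u v * lorentzInner s u w := by
  rw [← lorentzInner_eadd_neg hu hv hw, lorentzInner, h, egamma_eadd_neg hu hv,
    egamma_eadd_neg hu hw, zero_div, sub_zero, mul_one]

lemma lorentzInner_lineMap (hu : ‖u‖ < s) (hv : ‖v‖ < s) (w : EuclideanSpace ℝ (Fin n)) (t : ℝ) :
    lorentzInner s w (AffineMap.lineMap u v t) = egamma s (AffineMap.lineMap u v t) *
      ((1 - t) / egamma s u * lorentzInner s w u + t / egamma s v * lorentzInner s w v) := by
  have hu' := (egamma_pos_s14 hu).ne'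
  have hv' := (egamma_pos_s14 hv).ne'
  simp only [lorentzInner, AffineMap.lineMap_apply_module, inner_add_right, real_inner_smul_right]
  field_simp
  ring

-- Read `a, b` as the coefficients in `X_B = a X_P + b X_C` of lifts to the hyperboloid,
-- `q, g2, g23` as `γ_{PC}, γ_{PB}, γ_{BC}`, `p = γ_{OP}`, `c = γ_R`, and `x2, x3` as
-- `γ_{PB} |PB|, γ_{PC} |PC|`.
lemma secant_scalar_identity {s a b c p q g2 g23 x2 x3 : ℝ} (ha : a ≠ 0) (hb : 0 < b)
    (hc : c ≠ 0) (h23 : 0 < g23 + 1) (hx2 : 0 ≤ x2) (hx3 : 0 ≤ x3)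
    (hg2 : g2 = a + b * q) (hg23 : g23 = a * q + b) (hunit : a * g2 + b * g23 = 1)
    (hcirc : a * p + b * c = c) (hx2sq : x2 ^ 2 = s ^ 2 * (g2 ^ 2 - 1))
    (hx3sq : x3 ^ 2 = s ^ 2 * (q ^ 2 - 1)) :
    2 / (g23 + 1) * x2 * x3 = s ^ 2 * ((p / c) ^ 2 - 1) := by
  subst hg2 hg23
  have hx : x2 = b * x3 := by
    refine (sq_eq_sq₀ hx2 (mul_nonneg hb.le hx3)).1 ?_
    linear_combination hx2sq - b ^ 2 * hx3sq + s ^ 2 * hunit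
  have hp : p / c = (1 - b) / a := by
    rw [div_eq_div_iff hc ha]; linear_combination hcirc
  rw [hx, hp]
  field_simp
  linear_combination (2 * b * a ^ 2) * hx3sq + s ^ 2 * (a * q + 1 - b) * hunit

noncomputable def gyroPower (s R : ℝ) (O P : EuclideanSpace ℝ (Fin n)) : ℝ :=
  s ^ 2 * ((lorentzInner s O P / gammaR s R) ^ 2 - 1)

variable {R : ℝ} {O P A B C : EuclideanSpace ℝ (Fin n)}

lemma gammaR_sq_mul_sq_eq_gyroPower_of_tangent (hO : ‖O‖ < s) (hA : ‖A‖ < s) (hP : ‖P‖ < s)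
    (hR : ‖eadd s (-O) A‖ = R) (htan : ⟪eadd s (-A) P, eadd s (-A) O⟫ = 0) :
    gammaR s ‖eadd s (-P) A‖ ^ 2 * ‖eadd s (-P) A‖ ^ 2 = gyroPower s R O P := by
  have hpyth := lorentzInner_eq_mul_of_inner_eadd_neg_eq_zero hA hP hO htan
  rw [← mul_pow, sq_gammaR_norm_eadd_neg_mul hP hA, gyroPower, ← hR, gammaR_norm_eadd_neg hO hA,
    lorentzInner_comm O P, hpyth, lorentzInner_comm A P, lorentzInner_comm A O,
    mul_div_cancel_right₀ _ (lorentzInner_pos hO hA).ne']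

lemma gyroPower_eq_of_sbtw (hO : ‖O‖ < s) (hP : ‖P‖ < s) (hB : ‖B‖ < s) (hC : ‖C‖ < s)
    (hRB : ‖eadd s (-O) B‖ = R) (hRC : ‖eadd s (-O) C‖ = R) (hbtw : Sbtw ℝ P B C) :
    2 / (gammaR s ‖eadd s (-B) C‖ + 1) * (gammaR s ‖eadd s (-P) B‖ * ‖eadd s (-P) B‖) *
      (gammaR s ‖eadd s (-P) C‖ * ‖eadd s (-P) C‖) = gyroPower s R O P := by
  obtain ⟨t, ⟨ht0, ht1⟩, rfl⟩ := hbtw.mem_image_Ioo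
  set B := AffineMap.lineMap P C t
  set a := egamma s B * ((1 - t) / egamma s P)
  set b := egamma s B * (t / egamma s C)
  have hlin (w : EuclideanSpace ℝ (Fin n)) :
      lorentzInner s w B = a * lorentzInner s w P + b * lorentzInner s w C := by
    rw [lorentzInner_lineMap hP hC]; ring
  have ha : a ≠ 0 := by
    have := egamma_pos_s14 hB; have := egamma_pos_s14 hP; have : 0 < 1 - t := sub_pos.2 ht1; positivity
  have hb : 0 < b := by
    have := egamma_pos_s14 hB; have := egamma_pos_s14 hC; positivity
  rw [gyroPower, ← hRC, gammaR_norm_eadd_neg hB hC, gammaR_norm_eadd_neg hO hC]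
  refine secant_scalar_identity ha hb (lorentzInner_pos hO hC).ne'
    (by linarith [lorentzInner_pos hB hC]) (by unfold gammaR; positivity)
    (by unfold gammaR; positivity) ?_ ?_ ?_ ?_
    (sq_gammaR_norm_eadd_neg_mul hP hB) (sq_gammaR_norm_eadd_neg_mul hP hC)
  · rw [hlin, lorentzInner_self hP, mul_one]
  · rw [lorentzInner_comm, hlin, lorentzInner_self hC, lorentzInner_comm C P, mul_one]
  · rw [lorentzInner_comm P B, ← hlin, lorentzInner_self hB]
  · rw [← hlin, ← gammaR_norm_eadd_neg hO hB, ← gammaR_norm_eadd_neg hO hC, hRB, hRC]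

end

theorem gyrotangent_gyrosecant_general {n : ℕ} (s : ℝ)
    (O A1 A2 A3 P : EuclideanSpace ℝ (Fin n)) (hO : ‖O‖ < s)
    (R : ℝ)
    (hA1 : ‖A1‖ < s) (hA2 : ‖A2‖ < s) (hA3 : ‖A3‖ < s) (hP : ‖P‖ < s)
    (hR1 : ‖eadd s (-O) A1‖ = R) (hR2 : ‖eadd s (-O) A2‖ = R)
    (hR3 : ‖eadd s (-O) A3‖ = R)
    (hbtw : Sbtw ℝ P A2 A3)
    (htan : ⟪eadd s (-A1) P, eadd s (-A1) O⟫ = 0)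
    (d1 d2 d3 d23 : ℝ)
    (hd1 : d1 = ‖eadd s (-P) A1‖) (hd2 : d2 = ‖eadd s (-P) A2‖)
    (hd3 : d3 = ‖eadd s (-P) A3‖) (hd23 : d23 = ‖eadd s (-A2) A3‖) :
    (gammaR s d1) ^ 2 * d1 ^ 2 =
      2 / (gammaR s d23 + 1) * (gammaR s d2 * d2) * (gammaR s d3 * d3) := by
  subst hd1 hd2 hd3 hd23
  rw [gammaR_sq_mul_sq_eq_gyroPower_of_tangent hO hA1 hP hR1 htan,
    gyroPower_eq_of_sbtw hO hP hA2 hA3 hR2 hR3 hbtw]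

/-- **Gyrotangent–Gyrosecant Theorem.** -/
theorem gyrotangent_gyrosecant {n : ℕ} (hn : 2 ≤ n) (s : ℝ) (hs : 0 < s)
    (O A1 A2 A3 P : EuclideanSpace ℝ (Fin n)) (hO : ‖O‖ < s)
    (R : ℝ) (hRpos : 0 < R) (hRs : R < s)
    (hA1 : ‖A1‖ < s) (hA2 : ‖A2‖ < s) (hA3 : ‖A3‖ < s) (hP : ‖P‖ < s)
    (h12 : A1 ≠ A2) (h13 : A1 ≠ A3) (h23 : A2 ≠ A3)
    (hncol : ¬ Collinear ℝ ({A1, A2, A3} : Set (EuclideanSpace ℝ (Fin n))))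
    (hR1 : ‖eadd s (-O) A1‖ = R) (hR2 : ‖eadd s (-O) A2‖ = R)
    (hR3 : ‖eadd s (-O) A3‖ = R)
    (hP1 : P ≠ A1) (hP2 : P ≠ A2) (hP3 : P ≠ A3)
    (hbtw : Sbtw ℝ P A2 A3)
    (htan : ⟪eadd s (-A1) P, eadd s (-A1) O⟫ = 0)
    (d1 d2 d3 d23 : ℝ)
    (hd1 : d1 = ‖eadd s (-P) A1‖) (hd2 : d2 = ‖eadd s (-P) A2‖)
    (hd3 : d3 = ‖eadd s (-P) A3‖) (hd23 : d23 = ‖eadd s (-A2) A3‖) :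
    (gammaR s d1) ^ 2 * d1 ^ 2 =
      2 / (gammaR s d23 + 1) * (gammaR s d2 * d2) * (gammaR s d3 * d3) :=
  gyrotangent_gyrosecant_general s O A1 A2 A3 P hO R hA1 hA2 hA3 hP hR1 hR2 hR3 hbtw htan d1 d2 d3
    d23 hd1 hd2 hd3 hd23
end
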